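/- Let ‖·‖ be a URTC-norm on ℝ² with unit sphere S, and let f : S → S be the map sending each z ∈ S to the unique point f(z) ∈ S with ‖z − f(z)‖ = 1 and det(z, f(z)) > 0. Then f is continuous. -/

import Mathlib

/-!
For `z` on the `N`-sphere `S`, by the URTC property the only points of `S` at distance `1` from `z`
are `f z` and `z - f z`, and the latter has negative determinant against `z`. The
conditions `N (z - w) = 1` and `0 ≤ det (z, w)` are closed and `S` is compact, so every cluster
value of `f` at `z` is such a neighbour, hence equals `f z`.
-/

/-- `N` is a norm on `ℝ²`. -/
structure IsNorm (N : ℝ × ℝ → ℝ) : Prop where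
  add_le : ∀ x y : ℝ × ℝ, N (x + y) ≤ N x + N y
  smul_eq : ∀ (c : ℝ) (x : ℝ × ℝ), N (c • x) = |c| * N x
  eq_zero_of : ∀ x : ℝ × ℝ, N x = 0 → x = 0

/-- `N` is a URTC-norm: for every `a b` at `N`-distance `1`, there are exactly two
points `x` with `N (a - x) = 1` and `N (b - x) = 1`. -/
def IsURTC (N : ℝ × ℝ → ℝ) : Prop :=
  ∀ a b : ℝ × ℝ, N (a - b) = 1 →
    {x : ℝ × ℝ | N (a - x) = 1 ∧ N (b - x) = 1}.encard = 2

open Filter Topology Set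

theorem continuousOn_of_unique_mem_isClosed {X Y : Type*} [TopologicalSpace X]
    [TopologicalSpace Y] {f : X → Y} {s : Set X} {t : Set Y} {R : Set (X × Y)}
    (ht : IsCompact t) (hR : IsClosed R) (hst : MapsTo f s t) (hfR : ∀ x ∈ s, (x, f x) ∈ R)
    (hunique : ∀ x ∈ s, ∀ y ∈ t, (x, y) ∈ R → y = f x) : ContinuousOn f s := by
  intro x hx
  refine ht.tendsto_nhds_of_unique_mapClusterPt
    (eventually_nhdsWithin_of_forall fun z hz ↦ hst hz) fun y hy hcl ↦ hunique x hx y hy ?_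
  obtain ⟨U, hUs, hUy⟩ := mapClusterPt_iff_ultrafilter.1 hcl
  have hUx : Tendsto id (U : Filter X) (𝓝 x) := hUs.trans nhdsWithin_le_nhds
  exact hR.mem_of_tendsto (hUx.prodMk_nhds hUy)
    (Eventually.mono (hUs self_mem_nhdsWithin) fun z hz ↦ hfR z hz)

namespace IsNorm

variable {N : ℝ × ℝ → ℝ}

def toSeminorm (hN : IsNorm N) : Seminorm ℝ (ℝ × ℝ) :=
  Seminorm.of N hN.add_le fun c x ↦ by rw [hN.smul_eq, Real.norm_eq_abs]

theorem map_sub_rev (hN : IsNorm N) (x y : ℝ × ℝ) : N (x - y) = N (y - x) :=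
  _root_.map_sub_rev hN.toSeminorm x y

theorem continuous (hN : IsNorm N) : Continuous N := by
  rw [← continuousOn_univ]
  exact hN.toSeminorm.convexOn.continuousOn isOpen_univ

theorem pos (hN : IsNorm N) {x : ℝ × ℝ} (hx : x ≠ 0) : 0 < N x :=
  (apply_nonneg hN.toSeminorm x).lt_of_ne' fun h ↦ hx (hN.eq_zero_of x h)

-- The `N`-sphere is the radial projection of the sup-norm sphere.
theorem isCompact_sphere (hN : IsNorm N) : IsCompact {x | N x = 1} := by
  have hproj : ContinuousOn (fun x ↦ (N x)⁻¹ • x) (Metric.sphere (0 : ℝ × ℝ) 1) := by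
    refine ((hN.continuous.continuousOn).inv₀ fun x hx ↦ (hN.pos ?_).ne').smul continuousOn_id
    rintro rfl
    simp at hx
  refine ((_root_.isCompact_sphere 0 1).image_of_continuousOn hproj).of_isClosed_subset
    (isClosed_eq hN.continuous continuous_const) fun y hy ↦ ?_
  have hy0 : y ≠ 0 := by
    rintro rfl
    exact zero_ne_one ((map_zero hN.toSeminorm).symm.trans hy)
  have hny : 0 < ‖y‖ := norm_pos_iff.2 hy0
  refine ⟨‖y‖⁻¹ • y, by simp [norm_smul, hny.ne'], ?_⟩
  have hN' : N (‖y‖⁻¹ • y) = ‖y‖⁻¹ := by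
    rw [hN.smul_eq, abs_of_pos (inv_pos.2 hny), hy.out, mul_one]
  simp only [hN', inv_inv, smul_inv_smul₀ hny.ne']

end IsNorm

theorem IsURTC.eq_or_eq_sub {N : ℝ × ℝ → ℝ} (hU : IsURTC N) (hN : IsNorm N) {z u w : ℝ × ℝ}
    (hz : N z = 1) (hu : N u = 1) (hzu : N (z - u) = 1) (hw : N w = 1) (hzw : N (z - w) = 1) :
    w = u ∨ w = z - u := by
  have hne : u ≠ z - u := by
    intro h
    have hz2 : z = (2 : ℝ) • u := by
      rw [two_smul]
      nth_rewrite 2 [h]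
      exact (add_sub_cancel u z).symm
    have := hN.smul_eq 2 u
    rw [← hz2, hz, hu] at this
    norm_num at this
  have hmem : ∀ x, N x = 1 → N (z - x) = 1 → x ∈ {x | N (z - x) = 1 ∧ N (0 - x) = 1} :=
    fun x hx hzx ↦ ⟨hzx, by rwa [hN.map_sub_rev, sub_zero]⟩
  have hpair : {x | N (z - x) = 1 ∧ N (0 - x) = 1} = {u, z - u} := by
    refine ((toFinite _).eq_of_subset_of_encard_le ?_ ?_).symm
    · rintro x (rfl | rfl)
      exacts [hmem x hu hzu, hmem _ hzu (by rwa [sub_sub_cancel])]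
    · rw [hU z 0 (by rwa [sub_zero]), encard_pair hne]
  have hw' := hmem w hw hzw
  rwa [hpair] at hw'

/-- For a URTC-norm, the map `f` sending each unit vector `z` to its counterclockwise
unit-distance neighbour is continuous on the unit sphere. -/
theorem ccw_map_continuous (N : ℝ × ℝ → ℝ) (hN : IsNorm N) (hU : IsURTC N)
    (f : ℝ × ℝ → ℝ × ℝ)
    (hf : ∀ z : ℝ × ℝ, N z = 1 →
      N (f z) = 1 ∧ N (z - f z) = 1 ∧ 0 < z.1 * (f z).2 - z.2 * (f z).1) :
    ContinuousOn f {x : ℝ × ℝ | N x = 1} := by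
  have hccw : ∀ z, N z = 1 → ∀ w, N w = 1 → N (z - w) = 1 →
      0 ≤ z.1 * w.2 - z.2 * w.1 → w = f z := by
    intro z hz w hw hzw hdet
    obtain ⟨hfz, hzfz, hdetf⟩ := hf z hz
    refine (hU.eq_or_eq_sub hN hz hfz hzfz hw hzw).resolve_right ?_
    rintro rfl
    simp only [Prod.fst_sub, Prod.snd_sub] at hdet
    nlinarith
  have hclosed : IsClosed {p : (ℝ × ℝ) × (ℝ × ℝ) |
      N (p.1 - p.2) = 1 ∧ 0 ≤ p.1.1 * p.2.2 - p.1.2 * p.2.1} :=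
    (isClosed_eq (hN.continuous.comp (continuous_fst.sub continuous_snd)) continuous_const).inter
      (isClosed_le continuous_const
        (by fun_prop : Continuous fun p : (ℝ × ℝ) × (ℝ × ℝ) ↦ p.1.1 * p.2.2 - p.1.2 * p.2.1))
  exact continuousOn_of_unique_mem_isClosed hN.isCompact_sphere hclosed
    (fun z hz ↦ (hf z hz).1) (fun z hz ↦ ⟨(hf z hz).2.1, (hf z hz).2.2.le⟩)
    fun z hz w hw hzw ↦ hccw z hz w hw hzw.1 hzw.2
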